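/- Let X be a proper Hadamard space, r > 0, x, y ∈ X, δ_Γ > 0, T₀ > 6r, T > T₀ + 3r, γ an isometry of X, (ξ,η) ∈ L_r(x,γy) ∩ ∂_∞𝒵 and s ∈ (−r/2, r/2). Then: (a) if T₀+3r < d(x,γy) ≤ T, then ∫_{T₀}^{T+3r} e^{δ_Γ t} 1_{K_r(γy)}(g^{t+s} v(x;ξ,η)) dt ≥ r·e^{−3δ_Γ r}·e^{δ_Γ d(x,γy)}; (b) ∫_{T₀}^{T−3r} e^{δ_Γ t} 1_{K_r(γy)}(g^{t+s} v(x;ξ,η)) dt ≤ r·e^{3δ_Γ r}·e^{δ_Γ d(x,γy)}, and this integral equals 0 if d(x,γy) ≤ T₀ − 3r or d(x,γy) > T. -/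

import Mathlib

open Metric MeasureTheory Filter Topology Set
open scoped ENNReal NNReal

noncomputable section

namespace RicksBM

variable {X : Type*} [MetricSpace X]

/-- `σ` is a unit speed geodesic ray (only values at nonnegative times matter). -/
def IsRay (σ : ℝ → X) : Prop :=
  ∀ s t : ℝ, 0 ≤ s → 0 ≤ t → dist (σ s) (σ t) = |s - t|

/-- Two geodesic rays are asymptotic if they stay at bounded distance. -/
def RaysAsymptotic (σ τ : ℝ → X) : Prop :=
  ∃ C : ℝ, ∀ t : ℝ, 0 ≤ t → dist (σ t) (τ t) ≤ C

/-- The type of unit speed geodesic rays. -/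
abbrev Ray (X : Type*) [MetricSpace X] : Type _ := {σ : ℝ → X // IsRay σ}

/-- The space `𝒢` of parametrized geodesic lines, topologized as a subspace of
`C(ℝ, X)` with the compact-open topology. -/
abbrev GeodLine (X : Type*) [MetricSpace X] : Type _ := {v : C(ℝ, X) // Isometry v}

instance : MeasurableSpace (GeodLine X) := borel _

/-- The geodesic flow on the space of parametrized geodesic lines. -/
def geodFlow (t : ℝ) (v : GeodLine X) : GeodLine X :=
  ⟨⟨fun s => v.1 (s + t), v.1.continuous.comp (by fun_prop)⟩,
    v.2.comp (Isometry.of_dist_eq fun a b => dist_add_right a b t)⟩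

/-- Isometries of `X` act on geodesic lines. -/
instance : SMul (X ≃ᵢ X) (GeodLine X) :=
  ⟨fun γ v => ⟨⟨fun t => γ (v.1 t), γ.continuous.comp v.1.continuous⟩, γ.isometry.comp v.2⟩⟩

instance : MulAction (X ≃ᵢ X) (GeodLine X) where
  one_smul v := Subtype.ext (ContinuousMap.ext fun t => rfl)
  mul_smul γ₁ γ₂ v := Subtype.ext (ContinuousMap.ext fun t => rfl)

/-- `X` is a Hadamard space: complete, geodesic and satisfying the CAT(0)
comparison inequality. -/
structure IsHadamard (X : Type*) [MetricSpace X] : Prop where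
  complete : CompleteSpace X
  geodesic : ∀ x y : X, ∃ σ : ℝ → X,
    σ 0 = x ∧ σ (dist x y) = y ∧
    ∀ s ∈ Icc (0:ℝ) (dist x y), ∀ t ∈ Icc (0:ℝ) (dist x y), dist (σ s) (σ t) = |s - t|
  cat0 : ∀ (x y p : X) (σ : ℝ → X),
    σ 0 = x → σ (dist x y) = y →
    (∀ s ∈ Icc (0:ℝ) (dist x y), ∀ t ∈ Icc (0:ℝ) (dist x y), dist (σ s) (σ t) = |s - t|) →
    ∀ t ∈ Icc (0:ℝ) 1,
      dist p (σ (t * dist x y)) ^ 2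
        ≤ (1 - t) * dist p x ^ 2 + t * dist p y ^ 2 - t * (1 - t) * dist x y ^ 2

/-- `X` is geodesically complete: any geodesic segment extends to a full
geodesic line. -/
def GeodesicallyComplete (X : Type*) [MetricSpace X] : Prop :=
  ∀ x y : X, x ≠ y → ∃ (v : GeodLine X) (t : ℝ), v.1 t = x ∧ v.1 (t + dist x y) = y

/-- The geometric compactification `X̄ = X ∪ ∂X` of a Hadamard space, together
with the assignment of endpoints at infinity to geodesic rays and the Busemann
functions. -/
structure BoundaryData (X : Type*) [MetricSpace X] where
  /-- the compactification `X̄` -/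
  Xbar : Type*
  topXbar : TopologicalSpace Xbar
  /-- the inclusion `X → X̄` -/
  incl : X → Xbar
  isOpenEmbedding : Topology.IsOpenEmbedding incl
  denseRange : DenseRange incl
  compactSpace : CompactSpace Xbar
  t2 : T2Space Xbar
  /-- the endpoint at infinity of a geodesic ray -/
  endOfRay : Ray X → Xbar
  endOfRay_notMem : ∀ σ : Ray X, endOfRay σ ∉ Set.range incl
  endOfRay_tendsto : ∀ σ : Ray X, Tendsto (fun t => incl (σ.1 t)) atTop (𝓝 (endOfRay σ))
  endOfRay_eq_iff : ∀ σ τ : Ray X, (endOfRay σ = endOfRay τ ↔ RaysAsymptotic σ.1 τ.1)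
  ray_exists : ∀ p : Xbar, p ∉ Set.range incl → ∀ x : X,
    ∃ σ : Ray X, σ.1 0 = x ∧ endOfRay σ = p
  /-- the Busemann function `B_ξ(x,y)`, for `ξ` a boundary point -/
  busemann : Xbar → X → X → ℝ
  busemann_spec : ∀ (σ : Ray X) (x y : X),
    Tendsto (fun s => dist x (σ.1 s) - dist y (σ.1 s)) atTop
      (𝓝 (busemann (endOfRay σ) x y))

attribute [instance] BoundaryData.topXbar

variable (D : BoundaryData X)

/-- The geometric boundary `∂X`. -/
abbrev BoundaryData.bdry : Type _ := {p : D.Xbar // p ∉ Set.range D.incl}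

noncomputable instance (D : BoundaryData X) : MeasurableSpace D.Xbar := borel _

/-- Endpoint of a ray, as a boundary point. -/
def BoundaryData.endB (σ : Ray X) : D.bdry := ⟨D.endOfRay σ, D.endOfRay_notMem σ⟩

/-- The positive endpoint `v⁺` of a geodesic line. -/
def linePlus (v : GeodLine X) : D.bdry :=
  D.endB ⟨fun t => v.1 t, fun s t _ _ => by rw [v.2.dist_eq, Real.dist_eq]⟩

/-- The negative endpoint `v⁻` of a geodesic line. -/
def lineMinus (v : GeodLine X) : D.bdry :=
  D.endB ⟨fun t => v.1 (-t), fun s t _ _ => by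
    rw [v.2.dist_eq, Real.dist_eq, show -s - -t = t - s by ring, abs_sub_comm]⟩

/-- The pair of endpoints `∂_∞ v = (v⁻, v⁺)` of a geodesic line. -/
def ends (v : GeodLine X) : D.bdry × D.bdry := (lineMinus D v, linePlus D v)

open Classical in
/-- The extension of an isometry of `X` to the geometric boundary. -/
def BoundaryData.act (γ : X ≃ᵢ X) (ξ : D.bdry) : D.bdry :=
  if h : Nonempty X then
    D.endB ⟨fun t => γ (((D.ray_exists ξ.1 ξ.2 h.some).choose).1 t),
      fun s t hs ht => by
        rw [γ.isometry.dist_eq]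
        exact ((D.ray_exists ξ.1 ξ.2 h.some).choose).2 s t hs ht⟩
  else ξ

/-- The width of a geodesic line: the diameter of the set of origins of the
parallel lines with the same endpoints. -/
def width (v : GeodLine X) : ℝ≥0∞ :=
  EMetric.diam {p : X | ∃ u : GeodLine X,
    lineMinus D u = lineMinus D v ∧ linePlus D u = linePlus D v ∧
    D.busemann (lineMinus D v).1 (u.1 0) (v.1 0) = 0 ∧ u.1 0 = p}

/-- The set of pairs of boundary points joined by a geodesic line. -/
def endpointsAll : Set (D.bdry × D.bdry) :=
  {q | ∃ v : GeodLine X, ends D v = q}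

/-- `∂_∞ℛ` : pairs of boundary points joined by a rank one (finite width) line. -/
def endpointsR : Set (D.bdry × D.bdry) :=
  {q | ∃ v : GeodLine X, width D v ≠ ⊤ ∧ ends D v = q}

/-- `∂_∞𝒵` : pairs of boundary points joined by a zero width line. -/
def endpointsZ : Set (D.bdry × D.bdry) :=
  {q | ∃ v : GeodLine X, width D v = 0 ∧ ends D v = q}

/-- The union `(ξη)` of all geodesic lines joining `ξ` to `η`. -/
def joinSet (ξ η : D.bdry) : Set X :=
  {p | ∃ (v : GeodLine X) (t : ℝ), lineMinus D v = ξ ∧ linePlus D v = η ∧ v.1 t = p}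

/-- A geodesic line is `Is(X)`-recurrent. -/
def IsomRecurrent (v : GeodLine X) : Prop :=
  ∃ (g : ℕ → X ≃ᵢ X) (t : ℕ → ℝ), Tendsto t atTop atTop ∧
    Tendsto (fun n => g n • geodFlow (t n) v) atTop (𝓝 v)

/-- A geodesic line is `Γ`-recurrent. -/
def GammaRecurrent (Γ : Subgroup (X ≃ᵢ X)) (v : GeodLine X) : Prop :=
  ∃ (g : ℕ → Γ) (t : ℕ → ℝ), Tendsto t atTop atTop ∧
    Tendsto (fun n => (g n : X ≃ᵢ X) • geodFlow (t n) v) atTop (𝓝 v)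

/-- `∂X^rec`: endpoints of `Is(X)`-recurrent zero width geodesic lines. -/
def recBoundary : Set D.bdry :=
  {η | ∃ v : GeodLine X, width D v = 0 ∧ IsomRecurrent v ∧ linePlus D v = η}
/-- `Γ` is a discrete subgroup of the isometry group: orbits meet balls in
finite sets. -/
def IsDiscreteSubgroup (Γ : Subgroup (X ≃ᵢ X)) : Prop :=
  ∀ (x : X) (R : ℝ), {γ : Γ | dist x ((γ : X ≃ᵢ X) x) ≤ R}.Finite

/-- The limit set `L_Γ = closure(Γ z) ∩ ∂X` (independent of the basepoint `z`). -/
def limitSet (Γ : Subgroup (X ≃ᵢ X)) (z : X) : Set D.bdry :=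
  {ξ | ξ.1 ∈ closure (Set.range fun γ : Γ => D.incl ((γ : X ≃ᵢ X) z))}

/-- The radial limit set of `Γ` (independent of the basepoints `x`, `y`). -/
def radialLimitSet (Γ : Subgroup (X ≃ᵢ X)) (x y : X) : Set D.bdry :=
  {ξ | ∃ c : ℝ, 0 < c ∧ ∃ σ : Ray X, σ.1 0 = x ∧ D.endB σ = ξ ∧
    ∃ (γ : ℕ → Γ) (t : ℕ → ℝ), Tendsto t atTop atTop ∧
      ∀ n, dist ((γ n : X ≃ᵢ X) y) (σ.1 (t n)) ≤ c}

/-- The critical exponent `δ_Γ` of the Poincaré series (independent of `x`, `y`). -/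
def critExp (Γ : Subgroup (X ≃ᵢ X)) (x y : X) : ℝ :=
  sInf {s : ℝ | 0 < s ∧ Summable fun γ : Γ => Real.exp (-s * dist x ((γ : X ≃ᵢ X) y))}

/-- `Γ` is divergent: the Poincaré series diverges at the critical exponent. -/
def IsDivergent (Γ : Subgroup (X ≃ᵢ X)) (x y : X) : Prop :=
  ¬ Summable fun γ : Γ => Real.exp (-(critExp Γ x y) * dist x ((γ : X ≃ᵢ X) y))

/-- `γ` is axial with translation length `ℓ` and invariant geodesic `v`. -/
def IsAxialWith (γ : X ≃ᵢ X) (ℓ : ℝ) (v : GeodLine X) : Prop :=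
  0 < ℓ ∧ γ • v = geodFlow ℓ v

/-- The length spectrum of `Γ`: translation lengths of axial elements. -/
def lengthSpectrum (Γ : Subgroup (X ≃ᵢ X)) : Set ℝ :=
  {ℓ | ∃ γ ∈ Γ, ∃ v : GeodLine X, IsAxialWith γ ℓ v}

/-- The length spectrum is arithmetic: it generates a discrete (hence cyclic)
subgroup of `ℝ`. -/
def HasArithmeticLengthSpectrum (Γ : Subgroup (X ≃ᵢ X)) : Prop :=
  ∃ a : ℝ, ∀ ℓ ∈ lengthSpectrum Γ, ∃ n : ℤ, ℓ = n * a

/-- `γ` is a rank one isometry: axial, with all invariant geodesics of finite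
width. -/
def IsRankOneIsom (γ : X ≃ᵢ X) : Prop :=
  ∃ ℓ : ℝ, 0 < ℓ ∧ (∃ v : GeodLine X, γ • v = geodFlow ℓ v) ∧
    ∀ v : GeodLine X, γ • v = geodFlow ℓ v → width D v ≠ ⊤

/-- `Γ` is a rank one group: it contains two rank one isometries with disjoint
fixed point sets in the boundary. -/
def IsRankOneGroup (Γ : Subgroup (X ≃ᵢ X)) : Prop :=
  ∃ g h : X ≃ᵢ X, g ∈ Γ ∧ h ∈ Γ ∧ IsRankOneIsom D g ∧ IsRankOneIsom D h ∧
    Disjoint {ξ : D.bdry | D.act g ξ = ξ} {ξ : D.bdry | D.act h ξ = ξ}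

/-- `𝒵_Γ ≠ ∅` : there is a zero width geodesic with both endpoints in the
limit set. -/
def ZGammaNonempty (Γ : Subgroup (X ≃ᵢ X)) (z : X) : Prop :=
  ∃ v : GeodLine X, width D v = 0 ∧
    lineMinus D v ∈ limitSet D Γ z ∧ linePlus D v ∈ limitSet D Γ z

open Classical in
/-- The Gromov product `Gr_y(ξ,η)` of two boundary points joined by a geodesic. -/
def gromov (y : X) (ξ η : D.bdry) : ℝ :=
  if h : (joinSet D ξ η).Nonempty then
    (D.busemann ξ.1 y h.choose + D.busemann η.1 y h.choose) / 2
  else 0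

/-- The density `e^{2 δ Gr_x(ξ,η)} 1_{∂_∞ℛ}(ξ,η)` of the Bowen–Margulis
geodesic current with respect to `μ_x ⊗ μ_x`. -/
def bmDensity (δ : ℝ) (x : X) : D.bdry × D.bdry → ℝ≥0∞ :=
  (endpointsR D).indicator fun q => ENNReal.ofReal (Real.exp (2 * δ * gromov D x q.1 q.2))

/-- `(μ_x)` is a `δ`-dimensional `Γ`-invariant conformal density (with limit
set taken with respect to the basepoint `z`). -/
def IsConformalDensity (Γ : Subgroup (X ≃ᵢ X)) (δ : ℝ) (μ : X → Measure D.bdry)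
    (z : X) : Prop :=
  (∀ x : X, IsFiniteMeasure (μ x)) ∧ (∀ x : X, μ x ≠ 0) ∧
  (∀ x : X, μ x ((limitSet D Γ z)ᶜ) = 0) ∧
  (∀ γ : X ≃ᵢ X, γ ∈ Γ → ∀ x : X, ∀ E : Set D.bdry, MeasurableSet E →
      μ (γ x) E = μ x (D.act γ ⁻¹' E)) ∧
  (∀ x y : X, μ x = (μ y).withDensity
      fun η => ENNReal.ofReal (Real.exp (δ * D.busemann η.1 y x)))

/-- The set of origins of the zero width lines in `E` with endpoint pair `q`. -/
def originSet (E : Set (GeodLine X)) (q : D.bdry × D.bdry) : Set X :=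
  {p | ∃ v ∈ E, width D v = 0 ∧ ends D v = q ∧ v.1 0 = p}

/-- `m` is the Ricks measure on `𝒢` associated to the geodesic current `μbar`:
`m(E) = ∫ λ(p(E ∩ 𝒵 ∩ ∂_∞⁻¹(ξ,η))) dμbar(ξ,η)`, the fibrewise length measure
being one-dimensional Hausdorff measure. -/
def IsRicksMeasure [MeasurableSpace X] [BorelSpace X]
    (μbar : Measure (D.bdry × D.bdry)) (m : Measure (GeodLine X)) : Prop :=
  ∀ E : Set (GeodLine X), MeasurableSet E →
    m E = ∫⁻ q, μH[1] (originSet D E q) ∂μbar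

/-- The quotient `Γ\𝒢`. -/
abbrev lineQuot (Γ : Subgroup (X ≃ᵢ X)) : Type _ :=
  Quotient (MulAction.orbitRel Γ (GeodLine X))

/-- The geodesic flow on the quotient `Γ\𝒢`. -/
def flowQuot (Γ : Subgroup (X ≃ᵢ X)) (t : ℝ) : lineQuot Γ → lineQuot Γ :=
  Quotient.map' (geodFlow t) (fun a b hab => by
    obtain ⟨γ, hγ⟩ := hab
    exact ⟨γ, by rw [← hγ]; exact Subtype.ext (ContinuousMap.ext fun s => rfl)⟩)

/-- `mΓ` is the measure on `Γ\𝒢` obtained as the quotient of the `Γ`-invariant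
measure `m` on `𝒢`. -/
def IsQuotientMeasure (Γ : Subgroup (X ≃ᵢ X)) (m : Measure (GeodLine X))
    (mΓ : Measure (lineQuot Γ)) : Prop :=
  ∀ A₀ : Set (GeodLine X), MeasurableSet A₀ →
    Set.InjOn (Quotient.mk (MulAction.orbitRel Γ (GeodLine X))) A₀ →
    mΓ (Quotient.mk (MulAction.orbitRel Γ (GeodLine X)) '' A₀) = m A₀

/-- Mixing of the geodesic flow on `Γ\𝒢` with respect to `mΓ`: for Borel sets
of finite measure, `mΓ(A ∩ g^{-t}B)` converges, as `t → ±∞`, to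
`mΓ(A)·mΓ(B)/‖mΓ‖` (which is `0` when `mΓ` is infinite). -/
def IsMixing (Γ : Subgroup (X ≃ᵢ X)) (mΓ : Measure (lineQuot Γ)) : Prop :=
  ∀ A B : Set (lineQuot Γ), MeasurableSet A → MeasurableSet B →
    mΓ A ≠ ⊤ → mΓ B ≠ ⊤ →
    Tendsto (fun t : ℝ => mΓ (A ∩ flowQuot Γ t ⁻¹' B)) atTop
      (𝓝 (mΓ A * mΓ B / mΓ Set.univ)) ∧
    Tendsto (fun t : ℝ => mΓ (A ∩ flowQuot Γ t ⁻¹' B)) atBot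
      (𝓝 (mΓ A * mΓ B / mΓ Set.univ))
/-- The rays from the point `z` to the boundary point `η`. -/
def raysFromTo (z : X) (η : D.bdry) : Set (ℝ → X) :=
  {σ | ∃ hσ : IsRay σ, σ 0 = z ∧ D.endB ⟨σ, hσ⟩ = η}

/-- The shadow `O_r(ξ, x)` of the ball `B_r(x)` seen from the boundary point `ξ`. -/
def shadow (r : ℝ) (ξ : D.bdry) (x : X) : Set D.bdry :=
  {η | (ξ, η) ∈ endpointsAll D ∧ Metric.infDist x (joinSet D ξ η) < r}

/-- The set `∂̃O_r(ξ,x)` of boundary points joined to `ξ` at distance exactly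
`r` from `x`. -/
def shadowTildeBoundary (r : ℝ) (ξ : D.bdry) (x : X) : Set D.bdry :=
  {η | (ξ, η) ∈ endpointsAll D ∧ Metric.infDist x (joinSet D ξ η) = r}

/-- The large shadow `O_r^+(x, y)`. -/
def largeShadow (r : ℝ) (x y : X) : Set D.bdry :=
  {η | ∃ z ∈ Metric.ball x r, ∃ σ ∈ raysFromTo D z η, ∃ t : ℝ, 0 ≤ t ∧ σ t ∈ Metric.ball y r}

/-- The small shadow `O_r^-(x, y)`. -/
def smallShadow (r : ℝ) (x y : X) : Set D.bdry :=
  {η | ∀ z ∈ Metric.ball x r, ∃ σ ∈ raysFromTo D z η, ∃ t : ℝ, 0 ≤ t ∧ σ t ∈ Metric.ball y r}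

open Classical in
/-- The large shadow with source a point of `X̄` (with the convention
`O_r^±(ξ,x) = O_r(ξ,x)` for boundary sources). -/
def largeShadowBar (r : ℝ) (z : D.Xbar) (x : X) : Set D.bdry :=
  if h : z ∈ Set.range D.incl then largeShadow D r h.choose x
  else shadow D r ⟨z, h⟩ x

open Classical in
/-- The small shadow with source a point of `X̄` (with the convention
`O_r^±(ξ,x) = O_r(ξ,x)` for boundary sources). -/
def smallShadowBar (r : ℝ) (z : D.Xbar) (x : X) : Set D.bdry :=
  if h : z ∈ Set.range D.incl then smallShadow D r h.choose x
  else shadow D r ⟨z, h⟩ x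

/-- The small cone `C_r^-(x, A)`. -/
def smallCone (r : ℝ) (x : X) (A : Set D.bdry) : Set X :=
  {z | largeShadow D r x z ⊆ A}

/-- The large cone `C_r^+(x, A)`. -/
def largeCone (r : ℝ) (x : X) (A : Set D.bdry) : Set X :=
  {z | (largeShadow D r x z ∩ A).Nonempty}

/-- The corridor `L_r(x, y)`. -/
def corridor (r : ℝ) (x y : X) : Set (D.bdry × D.bdry) :=
  {q | ∃ (v : GeodLine X) (t : ℝ), ends D v = q ∧ 0 < t ∧
    v.1 0 ∈ Metric.ball x r ∧ v.1 t ∈ Metric.ball y r}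

/-- The set `K_r(z) = {g^s v(z;ξ,η) : (ξ,η) ∈ ∂_∞𝒵, d(z,(ξη)) < r,
s ∈ (-r/2, r/2)}`. -/
def Kset (r : ℝ) (z : X) : Set (GeodLine X) :=
  {w | width D w = 0 ∧
    Metric.infDist z (joinSet D (lineMinus D w) (linePlus D w)) < r ∧
    ∃ s : ℝ, |s| < r / 2 ∧
      dist z (w.1 (-s)) = Metric.infDist z (joinSet D (lineMinus D w) (linePlus D w))}

/-- `K_r^+(x, A)`. -/
def KsetPlus (r : ℝ) (x : X) (A : Set D.bdry) : Set (GeodLine X) :=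
  {w ∈ Kset D r x | linePlus D w ∈ A}

/-- `K_r^-(y, B)`. -/
def KsetMinus (r : ℝ) (y : X) (B : Set D.bdry) : Set (GeodLine X) :=
  {w ∈ Kset D r y | lineMinus D w ∈ B}

open Classical in
/-- The orbital measures `ν_{x,y}^T = δ_Γ e^{-δ_Γ T} Σ_{γ ∈ Γ, d(x,γy) ≤ T}
D_{γ y} ⊗ D_{γ^{-1} x}` on `X̄ × X̄`. -/
def nuT (Γ : Subgroup (X ≃ᵢ X)) (δ : ℝ) (x y : X) (T : ℝ) :
    Measure (D.Xbar × D.Xbar) :=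
  (ENNReal.ofReal (δ * Real.exp (-δ * T))) •
    Measure.sum (fun γ : Γ =>
      if dist x ((γ : X ≃ᵢ X) y) ≤ T then
        Measure.dirac (D.incl ((γ : X ≃ᵢ X) y), D.incl ((γ : X ≃ᵢ X).symm x))
      else 0)

/-- `(ξ₁, ξ₂, ξ₃, ξ₄)` is a quadrilateral. -/
def IsQuadrilateral (ξ₁ ξ₂ ξ₃ ξ₄ : D.bdry) : Prop :=
  (ξ₁, ξ₃) ∈ endpointsR D ∧ (ξ₁, ξ₄) ∈ endpointsR D ∧
  (ξ₂, ξ₃) ∈ endpointsR D ∧ (ξ₂, ξ₄) ∈ endpointsR D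

/-- The cross-ratio of a quadrilateral `(ξ, ξ', η, η')` with respect to the
basepoint `o`. -/
def crossRatio (o : X) (ξ ξ' η η' : D.bdry) : ℝ :=
  gromov D o ξ η + gromov D o ξ' η' - gromov D o ξ η' - gromov D o ξ' η

/-- A quasi-product geodesic current: a `Γ`-invariant Radon measure on
`∂_∞ℛ ⊆ ∂X × ∂X` absolutely continuous with respect to `(μ₋ ⊗ μ₊)|_{∂_∞ℛ}`. -/
def IsQuasiProductCurrent (Γ : Subgroup (X ≃ᵢ X)) (μm μp : Measure D.bdry)
    (μbar : Measure (D.bdry × D.bdry)) : Prop :=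
  (∀ γ : X ≃ᵢ X, γ ∈ Γ → ∀ E : Set (D.bdry × D.bdry), MeasurableSet E →
      μbar ((fun q : D.bdry × D.bdry => (D.act γ q.1, D.act γ q.2)) ⁻¹' E) = μbar E) ∧
  μbar ((endpointsR D)ᶜ) = 0 ∧
  μbar ≪ (μm.prod μp).restrict (endpointsR D) ∧
  (∀ K : Set (D.bdry × D.bdry), K ⊆ endpointsR D → IsCompact K → μbar K ≠ ⊤)

/-- The constant `Δ = sup_{R>0} ln(μbar(∂_∞ℬ(R)))/R` is finite, `o` being the
fixed basepoint. -/
def DeltaFinite (μbar : Measure (D.bdry × D.bdry)) (o : X) : Prop :=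
  ∃ Δ : ℝ, ∀ R : ℝ, 0 < R →
    μbar (ends D '' {v : GeodLine X | dist (v.1 0) o < R})
      ≤ ENNReal.ofReal (Real.exp (Δ * R))

/-- The orbit counting function `N_Γ(R) = #{γ ∈ Γ : d(x, γy) ≤ R}`. -/
def orbitCount (Γ : Subgroup (X ≃ᵢ X)) (x y : X) (R : ℝ) : ℕ :=
  Nat.card {γ : Γ // dist x ((γ : X ≃ᵢ X) y) ≤ R}
section AuxiliaryLemmas

private lemma le_of_sq_le_sq_aux {a b : ℝ} (ha : 0 ≤ a) (hb : 0 ≤ b) (h : a ^ 2 ≤ b ^ 2) :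
    a ≤ b := by nlinarith

lemma line_dist (v : GeodLine X) (a b : ℝ) : dist (v.1 a) (v.1 b) = |a - b| := by
  rw [v.2.dist_eq, Real.dist_eq]

/-- CAT(0) comparison for midpoints of two geodesics issuing from a common point. -/
lemma mid_comp (hHad : IsHadamard X) {x y z : X} {σ₁ σ₂ : ℝ → X}
    (h10 : σ₁ 0 = x) (h1d : σ₁ (dist x y) = y)
    (h1g : ∀ s ∈ Icc (0:ℝ) (dist x y), ∀ t ∈ Icc (0:ℝ) (dist x y),
      dist (σ₁ s) (σ₁ t) = |s - t|)
    (h20 : σ₂ 0 = x) (h2d : σ₂ (dist x z) = z)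
    (h2g : ∀ s ∈ Icc (0:ℝ) (dist x z), ∀ t ∈ Icc (0:ℝ) (dist x z),
      dist (σ₂ s) (σ₂ t) = |s - t|) :
    dist (σ₁ (dist x y / 2)) (σ₂ (dist x z / 2)) ≤ dist y z / 2 := by
  have hxy : (0:ℝ) ≤ dist x y := dist_nonneg
  have hxz : (0:ℝ) ≤ dist x z := dist_nonneg
  have e1 := hHad.cat0 x y z σ₁ h10 h1d h1g (1/2) (by norm_num)
  have e2 := hHad.cat0 x z (σ₁ (dist x y / 2)) σ₂ h20 h2d h2g (1/2) (by norm_num)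
  rw [show (1/2 : ℝ) * dist x y = dist x y / 2 by ring] at e1
  rw [show (1/2 : ℝ) * dist x z = dist x z / 2 by ring] at e2
  have hm1x : dist (σ₁ (dist x y / 2)) x = dist x y / 2 := by
    have h := h1g (dist x y / 2) ⟨by linarith, by linarith⟩ 0 ⟨le_refl _, hxy⟩
    rw [h10] at h
    rw [h, show dist x y / 2 - 0 = dist x y / 2 by ring, abs_of_nonneg (by linarith)]
  have c1 : dist z (σ₁ (dist x y / 2)) = dist (σ₁ (dist x y / 2)) z :=
    dist_comm _ _
  have c2 : dist z x = dist x z := dist_comm _ _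
  have c3 : dist z y = dist y z := dist_comm _ _
  rw [c1, c2, c3] at e1
  apply le_of_sq_le_sq_aux dist_nonneg (by positivity)
  nlinarith [e1, e2, hm1x]

/-- CAT(0) comparison for midpoints of the two "vertical" sides of a quadrilateral. -/
lemma quad_mid (hHad : IsHadamard X) {x₁ y₁ x₂ y₂ : X} {σ₁ σ₂ : ℝ → X}
    (h10 : σ₁ 0 = x₁) (h1d : σ₁ (dist x₁ y₁) = y₁)
    (h1g : ∀ s ∈ Icc (0:ℝ) (dist x₁ y₁), ∀ t ∈ Icc (0:ℝ) (dist x₁ y₁),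
      dist (σ₁ s) (σ₁ t) = |s - t|)
    (h20 : σ₂ 0 = x₂) (h2d : σ₂ (dist x₂ y₂) = y₂)
    (h2g : ∀ s ∈ Icc (0:ℝ) (dist x₂ y₂), ∀ t ∈ Icc (0:ℝ) (dist x₂ y₂),
      dist (σ₂ s) (σ₂ t) = |s - t|) :
    dist (σ₁ (dist x₁ y₁ / 2)) (σ₂ (dist x₂ y₂ / 2))
      ≤ (dist x₁ x₂ + dist y₁ y₂) / 2 := by
  obtain ⟨ρ, hρ0, hρd, hρg⟩ := hHad.geodesic x₁ y₂
  have step1 : dist (σ₁ (dist x₁ y₁ / 2)) (ρ (dist x₁ y₂ / 2)) ≤ dist y₁ y₂ / 2 :=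
    mid_comp hHad h10 h1d h1g hρ0 hρd hρg
  -- reversed geodesics, both issuing from `y₂`
  set ρ' : ℝ → X := fun u => ρ (dist x₁ y₂ - u) with hρ'
  set σ₂' : ℝ → X := fun u => σ₂ (dist x₂ y₂ - u) with hσ₂'
  have hd1 : dist y₂ x₁ = dist x₁ y₂ := dist_comm _ _
  have hd2 : dist y₂ x₂ = dist x₂ y₂ := dist_comm _ _
  have hρ'0 : ρ' 0 = y₂ := by simp [ρ', hρd]
  have hρ'd : ρ' (dist y₂ x₁) = x₁ := by simp [ρ', hd1, hρ0]
  have hρ'g : ∀ s ∈ Icc (0:ℝ) (dist y₂ x₁), ∀ t ∈ Icc (0:ℝ) (dist y₂ x₁),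
      dist (ρ' s) (ρ' t) = |s - t| := by
    intro s hs t ht
    rw [hd1] at hs ht
    have := hρg (dist x₁ y₂ - s) ⟨by linarith [hs.2], by linarith [hs.1]⟩
      (dist x₁ y₂ - t) ⟨by linarith [ht.2], by linarith [ht.1]⟩
    rw [hρ']
    dsimp only
    rw [this, show dist x₁ y₂ - s - (dist x₁ y₂ - t) = t - s by ring, abs_sub_comm]
  have hσ₂'0 : σ₂' 0 = y₂ := by simp [σ₂', h2d]
  have hσ₂'d : σ₂' (dist y₂ x₂) = x₂ := by simp [σ₂', hd2, h20]
  have hσ₂'g : ∀ s ∈ Icc (0:ℝ) (dist y₂ x₂), ∀ t ∈ Icc (0:ℝ) (dist y₂ x₂),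
      dist (σ₂' s) (σ₂' t) = |s - t| := by
    intro s hs t ht
    rw [hd2] at hs ht
    have := h2g (dist x₂ y₂ - s) ⟨by linarith [hs.2], by linarith [hs.1]⟩
      (dist x₂ y₂ - t) ⟨by linarith [ht.2], by linarith [ht.1]⟩
    rw [hσ₂']
    dsimp only
    rw [this, show dist x₂ y₂ - s - (dist x₂ y₂ - t) = t - s by ring, abs_sub_comm]
  have step2 : dist (ρ' (dist y₂ x₁ / 2)) (σ₂' (dist y₂ x₂ / 2)) ≤ dist x₁ x₂ / 2 :=
    mid_comp hHad hρ'0 hρ'd hρ'g hσ₂'0 hσ₂'d hσ₂'g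
  have hid1 : ρ' (dist y₂ x₁ / 2) = ρ (dist x₁ y₂ / 2) := by
    rw [hρ']
    dsimp only
    rw [hd1, show dist x₁ y₂ - dist x₁ y₂ / 2 = dist x₁ y₂ / 2 by ring]
  have hid2 : σ₂' (dist y₂ x₂ / 2) = σ₂ (dist x₂ y₂ / 2) := by
    rw [hσ₂']
    dsimp only
    rw [hd2, show dist x₂ y₂ - dist x₂ y₂ / 2 = dist x₂ y₂ / 2 by ring]
  rw [hid1, hid2] at step2
  calc dist (σ₁ (dist x₁ y₁ / 2)) (σ₂ (dist x₂ y₂ / 2))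
      ≤ dist (σ₁ (dist x₁ y₁ / 2)) (ρ (dist x₁ y₂ / 2))
        + dist (ρ (dist x₁ y₂ / 2)) (σ₂ (dist x₂ y₂ / 2)) := dist_triangle _ _ _
    _ ≤ (dist x₁ x₂ + dist y₁ y₂) / 2 := by linarith

/-- Two asymptotic rays issuing from the same point coincide. -/
lemma ray_unique (hHad : IsHadamard X) {σ τ : ℝ → X}
    (hσ : IsRay σ) (hτ : IsRay τ) (h0 : σ 0 = τ 0) {C : ℝ}
    (hC : ∀ t : ℝ, 0 ≤ t → dist (σ t) (τ t) ≤ C) :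
    ∀ t : ℝ, 0 ≤ t → σ t = τ t := by
  have step : ∀ t : ℝ, 0 ≤ t → dist (σ t) (τ t) ≤ dist (σ (2*t)) (τ (2*t)) / 2 := by
    intro t ht
    have hσd : dist (σ 0) (σ (2*t)) = 2*t := by
      rw [hσ 0 (2*t) le_rfl (by linarith), zero_sub, abs_neg, abs_of_nonneg (by linarith)]
    have hτd : dist (τ 0) (τ (2*t)) = 2*t := by
      rw [hτ 0 (2*t) le_rfl (by linarith), zero_sub, abs_neg, abs_of_nonneg (by linarith)]
    have h1g : ∀ s ∈ Icc (0:ℝ) (dist (σ 0) (σ (2*t))), ∀ u ∈ Icc (0:ℝ) (dist (σ 0) (σ (2*t))),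
        dist (σ s) (σ u) = |s - u| := fun s hs u hu => hσ s u hs.1 hu.1
    have h2g : ∀ s ∈ Icc (0:ℝ) (dist (τ 0) (τ (2*t))), ∀ u ∈ Icc (0:ℝ) (dist (τ 0) (τ (2*t))),
        dist (τ s) (τ u) = |s - u| := fun s hs u hu => hτ s u hs.1 hu.1
    have h1d : σ (dist (σ 0) (σ (2*t))) = σ (2*t) := by rw [hσd]
    have h2d : τ (dist (τ 0) (τ (2*t))) = τ (2*t) := by rw [hτd]
    have := quad_mid hHad rfl h1d h1g rfl h2d h2g
    rw [hσd, hτd, h0, dist_self] at this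
    rw [show 2*t/2 = t by ring] at this
    linarith
  have hC0 : 0 ≤ C := le_trans dist_nonneg (hC 0 le_rfl)
  have iter : ∀ n : ℕ, ∀ t : ℝ, 0 ≤ t → dist (σ t) (τ t) ≤ C / 2 ^ n := by
    intro n
    induction n with
    | zero => intro t ht; simpa using hC t ht
    | succ n ih =>
      intro t ht
      have h1 := step t ht
      have h2 := ih (2*t) (by linarith)
      have h3 : C / 2 ^ (n+1) = (C / 2 ^ n) / 2 := by rw [pow_succ]; ring
      rw [h3]
      linarith
  intro t ht
  have hlim : Tendsto (fun n : ℕ => C / 2 ^ n) atTop (𝓝 0) := by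
    have := (tendsto_pow_atTop_nhds_zero_of_lt_one (by norm_num : (0:ℝ) ≤ 1/2)
      (by norm_num : (1:ℝ)/2 < 1)).const_mul C
    simpa [div_eq_mul_inv, inv_pow] using this
  have hle : dist (σ t) (τ t) ≤ 0 := ge_of_tendsto' hlim fun n => iter n t ht
  exact dist_le_zero.mp hle

/-- The negative ray of a geodesic line. -/
def negRay (v : GeodLine X) : Ray X :=
  ⟨fun t => v.1 (-t), fun s t _ _ => by
    rw [v.2.dist_eq, Real.dist_eq, show -s - -t = t - s by ring, abs_sub_comm]⟩

/-- The positive ray of a geodesic line. -/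
def posRay (v : GeodLine X) : Ray X :=
  ⟨fun t => v.1 t, fun s t _ _ => by rw [v.2.dist_eq, Real.dist_eq]⟩

lemma lineMinus_eq_endB (v : GeodLine X) : lineMinus D v = D.endB (negRay v) := rfl

lemma linePlus_eq_endB (v : GeodLine X) : linePlus D v = D.endB (posRay v) := rfl

lemma endB_eq_iff (σ τ : Ray X) : D.endB σ = D.endB τ ↔ RaysAsymptotic σ.1 τ.1 := by
  rw [← D.endOfRay_eq_iff]
  exact ⟨fun h => congrArg Subtype.val h, fun h => Subtype.ext h⟩

/-- Two geodesic lines with the same endpoints through a common point (with the same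
parameter) coincide. -/
lemma line_unique (hHad : IsHadamard X) {u w : GeodLine X}
    (hm : lineMinus D u = lineMinus D w) (hp : linePlus D u = linePlus D w)
    (h0 : u.1 0 = w.1 0) : ∀ t : ℝ, u.1 t = w.1 t := by
  have hpos : ∀ t : ℝ, 0 ≤ t → u.1 t = w.1 t := by
    rw [linePlus_eq_endB, linePlus_eq_endB, endB_eq_iff] at hp
    obtain ⟨C, hC⟩ := hp
    exact ray_unique hHad (posRay u).2 (posRay w).2 h0 hC
  have hneg : ∀ t : ℝ, 0 ≤ t → u.1 (-t) = w.1 (-t) := by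
    rw [lineMinus_eq_endB, lineMinus_eq_endB, endB_eq_iff] at hm
    obtain ⟨C, hC⟩ := hm
    have h0' : u.1 (-(0:ℝ)) = w.1 (-(0:ℝ)) := by rw [neg_zero]; exact h0
    exact ray_unique hHad (negRay u).2 (negRay w).2 h0' hC
  intro t
  rcases le_total 0 t with h | h
  · exact hpos t h
  · have := hneg (-t) (by linarith)
    rwa [neg_neg] at this

lemma geodFlow_apply (c : ℝ) (v : GeodLine X) (t : ℝ) :
    (geodFlow c v).1 t = v.1 (t + c) := rfl

lemma lineMinus_flow (c : ℝ) (v : GeodLine X) :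
    lineMinus D (geodFlow c v) = lineMinus D v := by
  rw [lineMinus_eq_endB, lineMinus_eq_endB, endB_eq_iff]
  refine ⟨|c|, fun t _ => ?_⟩
  show dist (v.1 (-t + c)) (v.1 (-t)) ≤ |c|
  rw [line_dist, show -t + c - -t = c by ring]

lemma linePlus_flow (c : ℝ) (v : GeodLine X) :
    linePlus D (geodFlow c v) = linePlus D v := by
  rw [linePlus_eq_endB, linePlus_eq_endB, endB_eq_iff]
  refine ⟨|c|, fun t _ => ?_⟩
  show dist (v.1 (t + c)) (v.1 t) ≤ |c|
  rw [line_dist, show t + c - t = c by ring]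

lemma ends_flow (c : ℝ) (v : GeodLine X) : ends D (geodFlow c v) = ends D v := by
  unfold ends
  rw [lineMinus_flow, linePlus_flow]

lemma bus_line (v : GeodLine X) (a b : ℝ) :
    D.busemann (lineMinus D v).1 (v.1 a) (v.1 b) = a - b := by
  have hspec := D.busemann_spec (negRay v) (v.1 a) (v.1 b)
  have hconst : Tendsto
      (fun u : ℝ => dist (v.1 a) ((negRay v).1 u) - dist (v.1 b) ((negRay v).1 u))
      atTop (𝓝 (a - b)) := by
    apply Tendsto.congr' _ (tendsto_const_nhds (x := a - b))
    filter_upwards [eventually_ge_atTop (max (-a) (-b))] with u hu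
    have ha : -a ≤ u := (le_max_left _ _).trans hu
    have hb : -b ≤ u := (le_max_right _ _).trans hu
    show a - b = dist (v.1 a) (v.1 (-u)) - dist (v.1 b) (v.1 (-u))
    rw [line_dist, line_dist, show a - -u = a + u by ring, show b - -u = b + u by ring,
      abs_of_nonneg (by linarith), abs_of_nonneg (by linarith)]
    ring
  exact tendsto_nhds_unique hspec hconst

lemma bus_self (v : GeodLine X) (p : X) : D.busemann (lineMinus D v).1 p p = 0 := by
  have hspec := D.busemann_spec (negRay v) p p
  have hconst : Tendsto
      (fun u : ℝ => dist p ((negRay v).1 u) - dist p ((negRay v).1 u)) atTop (𝓝 0) := by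
    simpa using (tendsto_const_nhds (x := (0:ℝ)) (f := atTop (α := ℝ)))
  exact tendsto_nhds_unique hspec hconst

lemma bus_cocycle (v : GeodLine X) (p q z : X) :
    D.busemann (lineMinus D v).1 p z
      = D.busemann (lineMinus D v).1 p q + D.busemann (lineMinus D v).1 q z := by
  have h1 := D.busemann_spec (negRay v) p q
  have h2 := D.busemann_spec (negRay v) q z
  have h3 := D.busemann_spec (negRay v) p z
  refine tendsto_nhds_unique h3 ((h1.add h2).congr fun u => by ring)

/-- Any line with the same endpoints as a zero width line is a time shift of it. -/
lemma shift_of_width_zero (hHad : IsHadamard X) {v₀ u : GeodLine X}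
    (hw : width D v₀ = 0) (he : ends D u = ends D v₀) :
    ∃ c : ℝ, ∀ t : ℝ, u.1 t = v₀.1 (t + c) := by
  have hm : lineMinus D u = lineMinus D v₀ := congrArg Prod.fst he
  have hp : linePlus D u = linePlus D v₀ := congrArg Prod.snd he
  set c := D.busemann (lineMinus D v₀).1 (u.1 0) (v₀.1 0) with hc
  unfold width at hw
  replace hw := EMetric.diam_eq_zero_iff.mp hw
  have mem1 : v₀.1 0 ∈ {p : X | ∃ u' : GeodLine X,
      lineMinus D u' = lineMinus D v₀ ∧ linePlus D u' = linePlus D v₀ ∧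
      D.busemann (lineMinus D v₀).1 (u'.1 0) (v₀.1 0) = 0 ∧ u'.1 0 = p} :=
    ⟨v₀, rfl, rfl, bus_self D v₀ (v₀.1 0), rfl⟩
  have hbus : D.busemann (lineMinus D v₀).1 ((geodFlow (-c) u).1 0) (v₀.1 0) = 0 := by
    have hcoc := bus_cocycle D v₀ ((geodFlow (-c) u).1 0) (u.1 0) (v₀.1 0)
    have hval : D.busemann (lineMinus D v₀).1 ((geodFlow (-c) u).1 0) (u.1 0)
        = (0 + -c) - 0 := by
      rw [← hm]
      exact bus_line D u (0 + -c) 0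
    rw [hcoc, hval, ← hc]
    ring
  have mem2 : (geodFlow (-c) u).1 0 ∈ {p : X | ∃ u' : GeodLine X,
      lineMinus D u' = lineMinus D v₀ ∧ linePlus D u' = linePlus D v₀ ∧
      D.busemann (lineMinus D v₀).1 (u'.1 0) (v₀.1 0) = 0 ∧ u'.1 0 = p} :=
    ⟨geodFlow (-c) u, (lineMinus_flow D _ u).trans hm, (linePlus_flow D _ u).trans hp,
      hbus, rfl⟩
  have heq : (geodFlow (-c) u).1 0 = v₀.1 0 := hw mem2 mem1
  have huniq := line_unique D hHad ((lineMinus_flow D (-c) u).trans hm)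
    ((linePlus_flow D (-c) u).trans hp) heq
  refine ⟨c, fun t => ?_⟩
  have h := huniq (t + c)
  rw [geodFlow_apply, show t + c + -c = t by ring] at h
  exact h

/-- Any two lines with the same zero width endpoint pair differ by a time shift. -/
lemma shift_of_ends (hHad : IsHadamard X) {ξ η : D.bdry}
    (hZ : (ξ, η) ∈ endpointsZ D) {u w : GeodLine X}
    (hu : ends D u = (ξ, η)) (hw : ends D w = (ξ, η)) :
    ∃ c : ℝ, ∀ t : ℝ, u.1 t = w.1 (t + c) := by
  obtain ⟨v₀, hv₀w, hv₀e⟩ := hZ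
  obtain ⟨cu, hcu⟩ := shift_of_width_zero D hHad hv₀w (hu.trans hv₀e.symm)
  obtain ⟨cw, hcw⟩ := shift_of_width_zero D hHad hv₀w (hw.trans hv₀e.symm)
  refine ⟨cu - cw, fun t => ?_⟩
  rw [hcu t, hcw (t + (cu - cw)), show t + (cu - cw) + cw = t + cu by ring]

/-- Every line joining a zero width endpoint pair has zero width. -/
lemma width_zero_of_ends (hHad : IsHadamard X) {ξ η : D.bdry}
    (hZ : (ξ, η) ∈ endpointsZ D) {w : GeodLine X} (hw : ends D w = (ξ, η)) :
    width D w = 0 := by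
  unfold width
  refine EMetric.diam_eq_zero_iff.mpr ?_
  have key : ∀ u' : GeodLine X, lineMinus D u' = lineMinus D w →
      linePlus D u' = linePlus D w →
      D.busemann (lineMinus D w).1 (u'.1 0) (w.1 0) = 0 → u'.1 0 = w.1 0 := by
    intro u' hm' hp' hb'
    have hu'e : ends D u' = (ξ, η) := by
      show (lineMinus D u', linePlus D u') = (ξ, η)
      rw [hm', hp']
      exact hw
    obtain ⟨c, hcc⟩ := shift_of_ends D hHad hZ hu'e hw
    have hbl : D.busemann (lineMinus D w).1 (w.1 (0 + c)) (w.1 0) = (0 + c) - 0 :=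
      bus_line D w (0 + c) 0
    rw [hcc 0] at hb'
    have hc0 : c = 0 := by
      have := hbl.symm.trans hb'
      linarith
    rw [hcc 0, hc0, add_zero]
  rintro p₁ ⟨u₁, hm₁, hp₁, hb₁, he₁⟩ p₂ ⟨u₂, hm₂, hp₂, hb₂, he₂⟩
  rw [← he₁, ← he₂, key u₁ hm₁ hp₁ hb₁, key u₂ hm₂ hp₂ hb₂]

lemma joinSet_eq_range (hHad : IsHadamard X) {ξ η : D.bdry}
    (hZ : (ξ, η) ∈ endpointsZ D) {v : GeodLine X} (hv : ends D v = (ξ, η)) :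
    joinSet D ξ η = Set.range (fun t : ℝ => v.1 t) := by
  ext p
  constructor
  · rintro ⟨w, t, hwm, hwp, rfl⟩
    have hwe : ends D w = (ξ, η) := by
      show (lineMinus D w, linePlus D w) = (ξ, η)
      rw [hwm, hwp]
    obtain ⟨c, hcc⟩ := shift_of_ends D hHad hZ hwe hv
    exact ⟨t + c, (hcc t).symm⟩
  · rintro ⟨t, rfl⟩
    exact ⟨v, t, congrArg Prod.fst hv, congrArg Prod.snd hv, rfl⟩

lemma exists_min_on_line (v : GeodLine X) (p : X) :
    ∃ a : ℝ, ∀ t : ℝ, dist p (v.1 a) ≤ dist p (v.1 t) := by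
  have hcont : Continuous fun t : ℝ => dist p (v.1 t) :=
    continuous_const.dist (map_continuous v.1)
  set M : ℝ := 2 * dist p (v.1 0) + 1 with hM
  have hf0 : (0:ℝ) ≤ dist p (v.1 0) := dist_nonneg
  have h0mem : (0:ℝ) ∈ Icc (-M) M := ⟨by simp only [hM]; linarith, by simp only [hM]; linarith⟩
  obtain ⟨a, haI, hamin⟩ := isCompact_Icc.exists_isMinOn ⟨0, h0mem⟩ hcont.continuousOn
  refine ⟨a, fun t => ?_⟩
  rcases le_or_gt (|t|) M with h1 | h1
  · exact hamin ⟨neg_le_of_abs_le h1, le_of_abs_le h1⟩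
  · have htri : |t| ≤ dist p (v.1 0) + dist p (v.1 t) := by
      have h2 : dist (v.1 0) (v.1 t) = |t| := by
        rw [line_dist, zero_sub, abs_neg]
      have h3 := dist_triangle (v.1 0) p (v.1 t)
      rw [h2, dist_comm (v.1 0) p] at h3
      exact h3
    have h4 : dist p (v.1 0) < dist p (v.1 t) := by
      rw [hM] at h1
      linarith
    exact le_trans (hamin h0mem) h4.le

lemma min_unique_on_line (hHad : IsHadamard X) {v : GeodLine X} {p : X} {a b : ℝ}
    (hmin : ∀ t : ℝ, dist p (v.1 a) ≤ dist p (v.1 t))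
    (hb : dist p (v.1 b) = dist p (v.1 a)) : b = a := by
  have aux : ∀ a' b' : ℝ, a' ≤ b' → dist p (v.1 a') = dist p (v.1 a) →
      dist p (v.1 b') = dist p (v.1 a) → a' = b' := by
    intro a' b' hab ha' hb'
    set σ : ℝ → X := fun u => v.1 (a' + u) with hσ
    have hdd : dist (v.1 a') (v.1 b') = b' - a' := by
      rw [line_dist, abs_of_nonpos (by linarith)]; ring
    have h0 : σ 0 = v.1 a' := by simp [σ]
    have hde : σ (dist (v.1 a') (v.1 b')) = v.1 b' := by
      rw [hdd]
      show v.1 (a' + (b' - a')) = v.1 b'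
      rw [show a' + (b' - a') = b' by ring]
    have hg : ∀ s ∈ Icc (0:ℝ) (dist (v.1 a') (v.1 b')),
        ∀ t ∈ Icc (0:ℝ) (dist (v.1 a') (v.1 b')), dist (σ s) (σ t) = |s - t| := by
      intro s _ t _
      show dist (v.1 (a' + s)) (v.1 (a' + t)) = |s - t|
      rw [line_dist, show a' + s - (a' + t) = s - t by ring]
    have e := hHad.cat0 (v.1 a') (v.1 b') p σ h0 hde hg (1/2) (by norm_num)
    rw [hdd] at e
    have hmid : dist p (v.1 a) ≤ dist p (σ (1/2 * (b' - a'))) := hmin _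
    have h2 : (b' - a') ^ 2 ≤ 0 := by nlinarith [dist_nonneg (x := p) (y := v.1 a)]
    have h3 : b' - a' = 0 := by
      have h4 : (b' - a') ^ 2 = 0 := le_antisymm h2 (sq_nonneg _)
      exact pow_eq_zero_iff two_ne_zero |>.mp h4
    linarith
  rcases le_total a b with h | h
  · exact (aux a b h rfl hb).symm
  · exact aux b a h hb rfl

end AuxiliaryLemmas


/-- Estimates for the flow integrals through the sets `K_r(γy)` along the
projection geodesic `v(x;ξ,η)`, for `(ξ,η) ∈ L_r(x,γy) ∩ ∂_∞𝒵` and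
`s ∈ (-r/2, r/2)`. -/
theorem flow_integral_estimates
    {X : Type*} [MetricSpace X] [ProperSpace X]
    (hHad : IsHadamard X) (D : BoundaryData X)
    (r : ℝ) (hr : 0 < r) (x y : X)
    (δΓ : ℝ) (hδ : 0 < δΓ)
    (T₀ T : ℝ) (hT₀ : 6 * r < T₀) (hT : T₀ + 3 * r < T)
    (γ : X ≃ᵢ X) (ξ η : D.bdry)
    (hcor : (ξ, η) ∈ corridor D r x (γ y)) (hZ : (ξ, η) ∈ endpointsZ D)
    (s : ℝ) (hs : s ∈ Set.Ioo (-(r/2)) (r/2))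
    (v : GeodLine X) (hv : ends D v = (ξ, η))
    (hvproj : dist x (v.1 0) = Metric.infDist x (joinSet D ξ η)) :
    ((T₀ + 3 * r < dist x (γ y) ∧ dist x (γ y) ≤ T →
      r * Real.exp (-(3 * δΓ * r)) * Real.exp (δΓ * dist x (γ y)) ≤
        ∫ t in T₀..(T + 3 * r),
          Real.exp (δΓ * t) *
            (Kset D r (γ y)).indicator (fun _ => (1:ℝ)) (geodFlow (t + s) v))) ∧
    ((∫ t in T₀..(T - 3 * r),
        Real.exp (δΓ * t) *
          (Kset D r (γ y)).indicator (fun _ => (1:ℝ)) (geodFlow (t + s) v))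
      ≤ r * Real.exp (3 * δΓ * r) * Real.exp (δΓ * dist x (γ y))) ∧
    ((dist x (γ y) ≤ T₀ - 3 * r ∨ T < dist x (γ y)) →
      (∫ t in T₀..(T - 3 * r),
        Real.exp (δΓ * t) *
          (Kset D r (γ y)).indicator (fun _ => (1:ℝ)) (geodFlow (t + s) v)) = 0) := by
  obtain ⟨hsl, hsr⟩ := hs
  obtain ⟨u, t₀, hue, ht₀, hu0, hut₀⟩ := hcor
  have hvm : lineMinus D v = ξ := congrArg Prod.fst hv
  have hvp : linePlus D v = η := congrArg Prod.snd hv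
  have hJoin : joinSet D ξ η = Set.range (fun t : ℝ => v.1 t) :=
    joinSet_eq_range D hHad hZ hv
  -- `x` is close to `v 0`
  have hxv : dist x (v.1 0) < r := by
    rw [hvproj]
    calc Metric.infDist x (joinSet D ξ η) ≤ dist x (u.1 0) :=
          Metric.infDist_le_dist_of_mem
            ⟨u, 0, congrArg Prod.fst hue, congrArg Prod.snd hue, rfl⟩
      _ < r := by rw [dist_comm]; exact Metric.mem_ball.mp hu0
  -- the projection of `γ y` on the line
  obtain ⟨a, ha⟩ := exists_min_on_line v (γ y)
  have hinf : Metric.infDist (γ y) (joinSet D ξ η) = dist (γ y) (v.1 a) := by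
    rw [hJoin]
    refine le_antisymm ?_ ?_
    · exact Metric.infDist_le_dist_of_mem ⟨a, rfl⟩
    · by_contra h
      push_neg at h
      obtain ⟨p, hp, hplt⟩ := (Metric.infDist_lt_iff ⟨v.1 0, Set.mem_range_self 0⟩).mp h
      obtain ⟨t, rfl⟩ := hp
      exact absurd hplt (not_lt.mpr (ha t))
  obtain ⟨c₀, hc₀⟩ := shift_of_ends D hHad hZ hue hv
  have hut₀' : dist (γ y) (v.1 (t₀ + c₀)) < r := by
    rw [← hc₀ t₀, dist_comm]; exact Metric.mem_ball.mp hut₀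
  have hDr : dist (γ y) (v.1 a) < r := lt_of_le_of_lt (ha (t₀ + c₀)) hut₀'
  have hc₀b : |c₀| < 2 * r := by
    have h1 : dist (v.1 0) (v.1 c₀) = |c₀| := by
      rw [line_dist, zero_sub, abs_neg]
    have h2 : v.1 c₀ = u.1 0 := by rw [hc₀ 0, zero_add]
    have h3 := dist_triangle (v.1 0) x (u.1 0)
    have h4 : dist x (u.1 0) < r := by rw [dist_comm]; exact Metric.mem_ball.mp hu0
    have h5 : dist (v.1 0) x < r := by rw [dist_comm]; exact hxv
    rw [h2] at h1
    linarith [h1 ▸ h3]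
  set d := dist x (γ y) with hd
  have hva0 : dist (v.1 0) (v.1 a) = |a| := by rw [line_dist, zero_sub, abs_neg]
  have hv0x : dist (v.1 0) x < r := by rw [dist_comm]; exact hxv
  have habs1 : |a| < d + 2 * r := by
    have h1 := dist_triangle4 (v.1 0) x (γ y) (v.1 a)
    rw [hva0] at h1
    linarith
  have habs2 : d - 2 * r < |a| := by
    have h1 := dist_triangle4 x (v.1 0) (v.1 a) (γ y)
    rw [hva0, dist_comm (v.1 a) (γ y)] at h1
    linarith
  have halow : -(4 * r) < a := by
    have h1 : dist (v.1 a) (v.1 (t₀ + c₀)) = |a - (t₀ + c₀)| := line_dist v _ _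
    have h2 := dist_triangle (v.1 a) (γ y) (v.1 (t₀ + c₀))
    have h3 : dist (v.1 a) (γ y) < r := by rw [dist_comm]; exact hDr
    have h5 : |a - (t₀ + c₀)| < 2 * r := by rw [← h1]; linarith
    have h6 := (abs_lt.mp hc₀b).1
    have h7 := (abs_lt.mp h5).1
    linarith
  have hapos : 6 * r ≤ d → d - 2 * r < a := by
    intro h6
    rcases le_or_gt 0 a with h | h
    · rwa [abs_of_nonneg h] at habs2
    · rw [abs_of_neg h] at habs2
      linarith
  have haR : a < d + 2 * r := (le_abs_self a).trans_lt habs1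
  set α := a - s - r / 2 with hα
  set β := a - s + r / 2 with hβ
  have hαβ : α ≤ β := by rw [hα, hβ]; linarith
  -- the key characterization of the flow times in `K_r(γ y)`
  have hkey : ∀ t : ℝ, (geodFlow (t + s) v ∈ Kset D r (γ y)) ↔ t ∈ Set.Ioo α β := by
    intro t
    have hm' : lineMinus D (geodFlow (t + s) v) = ξ := (lineMinus_flow D _ v).trans hvm
    have hp' : linePlus D (geodFlow (t + s) v) = η := (linePlus_flow D _ v).trans hvp
    constructor
    · rintro ⟨hwid, hlt, s', hs', hdist⟩
      rw [hm', hp', hinf] at hdist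
      have harg : (geodFlow (t + s) v).1 (-s') = v.1 (-s' + (t + s)) := rfl
      rw [harg] at hdist
      have hm := min_unique_on_line hHad ha hdist
      have habs := abs_lt.mp hs'
      constructor
      · rw [hα]; linarith
      · rw [hβ]; linarith
    · rintro ⟨hIl, hIr⟩
      have hwid : width D (geodFlow (t + s) v) = 0 :=
        width_zero_of_ends D hHad hZ ((ends_flow D _ v).trans hv)
      refine ⟨hwid, ?_, t + s - a, ?_, ?_⟩
      · rw [hm', hp', hinf]; exact hDr
      · rw [abs_lt]
        rw [hα] at hIl
        rw [hβ] at hIr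
        constructor <;> linarith
      · rw [hm', hp', hinf]
        show dist (γ y) (v.1 (-(t + s - a) + (t + s))) = dist (γ y) (v.1 a)
        rw [show -(t + s - a) + (t + s) = a by ring]
  -- translation of the integrand
  set F : ℝ → ℝ := Set.indicator (Set.Ioo α β) (fun t => Real.exp (δΓ * t)) with hF
  have hind : ∀ t : ℝ, Real.exp (δΓ * t) *
      (Kset D r (γ y)).indicator (fun _ => (1:ℝ)) (geodFlow (t + s) v) = F t := by
    intro t
    by_cases h : t ∈ Set.Ioo α β
    · rw [hF, Set.indicator_of_mem h, Set.indicator_of_mem ((hkey t).mpr h), mul_one]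
    · rw [hF, Set.indicator_of_notMem h,
        Set.indicator_of_notMem (fun hh => h ((hkey t).mp hh)), mul_zero]
  have hFnn : ∀ t : ℝ, 0 ≤ F t :=
    fun t => Set.indicator_nonneg (fun u _ => (Real.exp_pos _).le) t
  have hIcc : MeasureTheory.IntegrableOn (fun t : ℝ => Real.exp (δΓ * t)) (Set.Icc α β) :=
    (Real.continuous_exp.comp (continuous_const.mul continuous_id)).integrableOn_Icc
  have hIoo : MeasureTheory.IntegrableOn (fun t : ℝ => Real.exp (δΓ * t)) (Set.Ioo α β) :=
    hIcc.mono_set Set.Ioo_subset_Icc_self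
  have hFint : MeasureTheory.Integrable F := hIoo.integrable_indicator measurableSet_Ioo
  have hii : ∀ a' b' : ℝ, IntervalIntegrable F MeasureTheory.volume a' b' :=
    fun a' b' => hFint.intervalIntegrable
  have hvol : (MeasureTheory.volume (Set.Ioo α β)).toReal = r := by
    rw [Real.volume_Ioo, show β - α = r by rw [hα, hβ]; ring, ENNReal.toReal_ofReal hr.le]
  have hvollt : MeasureTheory.volume (Set.Ioo α β) < ⊤ := by
    rw [Real.volume_Ioo]; exact ENNReal.ofReal_lt_top
  have hconstInt : MeasureTheory.IntegrableOn (fun _ : ℝ => Real.exp (δΓ * β))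
      (Set.Ioo α β) := MeasureTheory.integrableOn_const hvollt.ne
  have hconstInt' : MeasureTheory.IntegrableOn (fun _ : ℝ => Real.exp (δΓ * α))
      (Set.Ioo α β) := MeasureTheory.integrableOn_const hvollt.ne
  have hintIoo_le : (∫ t in Set.Ioo α β, Real.exp (δΓ * t)) ≤ r * Real.exp (δΓ * β) := by
    calc (∫ t in Set.Ioo α β, Real.exp (δΓ * t))
        ≤ ∫ _ in Set.Ioo α β, Real.exp (δΓ * β) := by
          refine MeasureTheory.setIntegral_mono_on hIoo hconstInt measurableSet_Ioo ?_
          intro t ht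
          exact Real.exp_le_exp.mpr (mul_le_mul_of_nonneg_left ht.2.le hδ.le)
      _ = r * Real.exp (δΓ * β) := by
          rw [MeasureTheory.setIntegral_const, measureReal_def, hvol, smul_eq_mul]
  have hintIoo_ge : r * Real.exp (δΓ * α) ≤ ∫ t in Set.Ioo α β, Real.exp (δΓ * t) := by
    calc r * Real.exp (δΓ * α)
        = ∫ _ in Set.Ioo α β, Real.exp (δΓ * α) := by
          rw [MeasureTheory.setIntegral_const, measureReal_def, hvol, smul_eq_mul]
      _ ≤ ∫ t in Set.Ioo α β, Real.exp (δΓ * t) := by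
          refine MeasureTheory.setIntegral_mono_on hconstInt' hIoo measurableSet_Ioo ?_
          intro t ht
          exact Real.exp_le_exp.mpr (mul_le_mul_of_nonneg_left ht.1.le hδ.le)
  have hβd : β < d + 3 * r := by rw [hβ]; linarith
  have hTT : T₀ ≤ T - 3 * r := by linarith
  refine ⟨?_, ?_, ?_⟩
  · -- (a) the lower bound
    rintro ⟨hd1, hd2⟩
    have haL : d - 2 * r < a := hapos (by linarith)
    have hTα : T₀ ≤ α := by rw [hα]; linarith
    have hβT : β ≤ T + 3 * r := by rw [hβ]; linarith
    rw [intervalIntegral.integral_congr (fun t _ => hind t)]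
    have e1 : (∫ t in T₀..α, F t) + (∫ t in α..β, F t) = ∫ t in T₀..β, F t :=
      intervalIntegral.integral_add_adjacent_intervals (hii _ _) (hii _ _)
    have e2 : (∫ t in T₀..β, F t) + (∫ t in β..(T + 3 * r), F t)
        = ∫ t in T₀..(T + 3 * r), F t :=
      intervalIntegral.integral_add_adjacent_intervals (hii _ _) (hii _ _)
    have h01 : 0 ≤ ∫ t in T₀..α, F t :=
      intervalIntegral.integral_nonneg hTα (fun t _ => hFnn t)
    have h03 : 0 ≤ ∫ t in β..(T + 3 * r), F t :=
      intervalIntegral.integral_nonneg hβT (fun t _ => hFnn t)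
    have hmid : (∫ t in α..β, F t) = ∫ t in Set.Ioo α β, Real.exp (δΓ * t) := by
      rw [intervalIntegral.integral_of_le hαβ, hF,
        MeasureTheory.setIntegral_indicator measurableSet_Ioo,
        Set.inter_eq_self_of_subset_right Set.Ioo_subset_Ioc_self]
    have hLHS : r * Real.exp (-(3 * δΓ * r)) * Real.exp (δΓ * d)
        = r * Real.exp (δΓ * (d - 3 * r)) := by
      rw [mul_assoc, ← Real.exp_add, show -(3 * δΓ * r) + δΓ * d = δΓ * (d - 3 * r) by ring]
    have hαlb : r * Real.exp (δΓ * (d - 3 * r)) ≤ r * Real.exp (δΓ * α) := by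
      have : d - 3 * r ≤ α := by rw [hα]; linarith
      exact mul_le_mul_of_nonneg_left
        (Real.exp_le_exp.mpr (mul_le_mul_of_nonneg_left this hδ.le)) hr.le
    rw [hLHS, ← e2, ← e1, hmid]
    linarith
  · -- (b) the upper bound
    rw [intervalIntegral.integral_congr (fun t _ => hind t),
      intervalIntegral.integral_of_le hTT]
    calc (∫ t in Set.Ioc T₀ (T - 3 * r), F t)
        ≤ ∫ t, F t :=
          MeasureTheory.setIntegral_le_integral hFint
            (Filter.Eventually.of_forall hFnn)
      _ = ∫ t in Set.Ioo α β, Real.exp (δΓ * t) := by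
          rw [hF, MeasureTheory.integral_indicator measurableSet_Ioo]
      _ ≤ r * Real.exp (δΓ * β) := hintIoo_le
      _ ≤ r * Real.exp (3 * δΓ * r) * Real.exp (δΓ * d) := by
          rw [mul_assoc, ← Real.exp_add]
          refine mul_le_mul_of_nonneg_left (Real.exp_le_exp.mpr ?_) hr.le
          have : δΓ * β ≤ δΓ * (d + 3 * r) :=
            mul_le_mul_of_nonneg_left hβd.le hδ.le
          linarith [this, show δΓ * (d + 3 * r) = 3 * δΓ * r + δΓ * d from by ring]
  · -- (c) vanishing
    intro hcase
    have hzero : Set.EqOn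
        (fun t => Real.exp (δΓ * t) *
          (Kset D r (γ y)).indicator (fun _ => (1:ℝ)) (geodFlow (t + s) v))
        (fun _ => (0:ℝ)) (Set.uIcc T₀ (T - 3 * r)) := by
      intro t ht
      rw [Set.uIcc_of_le hTT] at ht
      show Real.exp (δΓ * t) *
          (Kset D r (γ y)).indicator (fun _ => (1:ℝ)) (geodFlow (t + s) v) = 0
      rw [hind t, hF]
      apply Set.indicator_of_notMem
      rcases hcase with hc | hc
      · intro hmem
        have := hmem.2
        linarith [ht.1]
      · have haL : d - 2 * r < a := hapos (by linarith)
        have hα' : T - 3 * r < α := by rw [hα]; linarith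
        intro hmem
        have := hmem.1
        linarith [ht.2]
    rw [intervalIntegral.integral_congr hzero]
    simp

end RicksBM
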